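/- Let n, d ∈ ℕ with 1 ≤ d ≤ n/3, and let k be an integer with c(Q_n) ≤ k and k < (1/2) · 2^n · (d/(e·n))^d. Then capt_k(Q_n) > d. -/

import Mathlib

open SimpleGraph Finset

/-- One step of a player in a reflexive graph: stay put (the loop) or move along an edge. -/
def stepRel {V : Type*} (G : SimpleGraph V) (u v : V) : Prop := u = v ∨ G.Adj u v

/-- `CatchIn G t c r`: with the cops currently at positions `c` and the robber at `r`
(cops to move next), the cops can guarantee to capture the robber within `t` further
rounds (a round consists of a cops' move followed by a robber's move; capture means
some cop occupies the robber's vertex). -/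
def CatchIn {V : Type*} (G : SimpleGraph V) {k : ℕ} : ℕ → (Fin k → V) → V → Prop
  | 0, c, r => ∃ i, c i = r
  | (t + 1), c, r => (∃ i, c i = r) ∨
      ∃ c' : Fin k → V, (∀ i, stepRel G (c i) (c' i)) ∧
        ((∃ i, c' i = r) ∨ ∀ r', stepRel G r r' → CatchIn G t c' r')

/-- `k` cops have a strategy capturing the robber within `t` rounds (not counting
round 0, in which the cops choose starting positions and then the robber, knowing
the cops' positions, chooses hers). -/
def CopsWinIn {V : Type*} (G : SimpleGraph V) (k t : ℕ) : Prop :=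
  ∃ c₀ : Fin k → V, ∀ r₀ : V, CatchIn G t c₀ r₀

/-- The cop number: the least `k` such that `k` cops have a winning strategy. -/
noncomputable def copNumber {V : Type*} (G : SimpleGraph V) : ℕ :=
  sInf {k | ∃ t, CopsWinIn G k t}

/-- The `k`-capture time: the least `t` such that `k` cops can guarantee capture
within `t` rounds. -/
noncomputable def captTime {V : Type*} (G : SimpleGraph V) (k : ℕ) : ℕ :=
  sInf {t | CopsWinIn G k t}

/-- The metric `k`-center radius: the least `r` such that some set of at most `k`
vertices is within distance `r` of every vertex. -/
noncomputable def radK {V : Type*} (G : SimpleGraph V) (k : ℕ) : ℕ :=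
  sInf {r | ∃ S : Finset V, S.Nonempty ∧ S.card ≤ k ∧ ∀ v, ∃ s ∈ S, G.dist v s ≤ r}

/-- `H ⊆ V(G)` induces a retract of the reflexive graph `G`: there is a map
`f : V(G) → H` fixing `H` pointwise such that every edge `uv` of `G` is sent to a
single vertex or to an edge. -/
def IsRetract {V : Type*} (G : SimpleGraph V) (H : Set V) : Prop :=
  ∃ f : V → V, (∀ v, f v ∈ H) ∧ (∀ v ∈ H, f v = v) ∧
    ∀ u v, G.Adj u v → f u = f v ∨ G.Adj (f u) (f v)

/-- The hypercube `Q n`: vertices are binary strings of length `n`, adjacent iff they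
differ in exactly one coordinate (loops at every vertex are implicit). -/
def hypercube (n : ℕ) : SimpleGraph (Fin n → Bool) :=
  SimpleGraph.fromRel (fun u v => ∃ j, u j ≠ v j ∧ ∀ i, i ≠ j → u i = v i)

/-!
If `k` cops capture the robber within `t` rounds, every robber start lies within graph distance
`t` of some cop's start, and graph distance in `Q_n` dominates Hamming distance; so the cops'
starting positions form a binary covering code of radius `t`. Since `k ≥ c(Q_n)`, the capture time
is attained, and if it were at most `d` then, a Hamming ball of radius `d ≤ n` having at most
`∑_{i ≤ d} C(n, i) ≤ (e n / d) ^ d` points, we would get `2 ^ n ≤ k (e n / d) ^ d`.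
-/

section Game

variable {V : Type*} {G : SimpleGraph V}

lemma edist_le_one_of_stepRel {u v : V} (h : stepRel G u v) : G.edist u v ≤ 1 :=
  edist_le_one_iff_adj_or_eq.2 h.symm

lemma CatchIn.exists_edist_le {k t : ℕ} {c : Fin k → V} {r : V} (h : CatchIn G t c r) :
    ∃ i, G.edist (c i) r ≤ t := by
  induction t generalizing c r with
  | zero =>
    obtain ⟨i, rfl⟩ := h
    exact ⟨i, by simp⟩
  | succ t ih =>
    rcases h with ⟨i, rfl⟩ | ⟨c', hstep, ⟨i, rfl⟩ | hnext⟩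
    · exact ⟨i, by simp⟩
    · exact ⟨i, (edist_le_one_of_stepRel (hstep i)).trans (by simp)⟩
    · obtain ⟨i, hi⟩ := ih (hnext r (Or.inl rfl))
      refine ⟨i, ?_⟩
      calc G.edist (c i) r ≤ G.edist (c i) (c' i) + G.edist (c' i) r := G.edist_triangle
        _ ≤ 1 + t := add_le_add (edist_le_one_of_stepRel (hstep i)) hi
        _ = (t + 1 : ℕ) := by push_cast; ring

lemma not_catchIn_of_fin_zero {t : ℕ} (c : Fin 0 → V) (r : V) : ¬CatchIn G t c r := by
  induction t generalizing c r with
  | zero => rintro ⟨i, -⟩; exact i.elim0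
  | succ t ih =>
    rintro (⟨i, -⟩ | ⟨c', -, ⟨i, -⟩ | hnext⟩)
    · exact i.elim0
    · exact i.elim0
    · exact ih c' r (hnext r (Or.inl rfl))

lemma CatchIn.comp_surjective {k k' t : ℕ} {c : Fin k → V} {r : V} {f : Fin k' → Fin k}
    (hf : f.Surjective) (h : CatchIn G t c r) : CatchIn G t (c ∘ f) r := by
  induction t generalizing c r with
  | zero =>
    obtain ⟨i, rfl⟩ := h
    obtain ⟨j, rfl⟩ := hf i
    exact ⟨j, rfl⟩
  | succ t ih =>
    rcases h with ⟨i, rfl⟩ | ⟨c', hstep, ⟨i, rfl⟩ | hnext⟩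
    · obtain ⟨j, rfl⟩ := hf i
      exact Or.inl ⟨j, rfl⟩
    · obtain ⟨j, rfl⟩ := hf i
      exact Or.inr ⟨c' ∘ f, fun j => hstep (f j), Or.inl ⟨j, rfl⟩⟩
    · exact Or.inr ⟨c' ∘ f, fun j => hstep (f j), Or.inr fun r' hr' => ih (hnext r' hr')⟩

lemma CopsWinIn.mono_cops [Nonempty V] {k k' t : ℕ} (h : CopsWinIn G k t) (hkk : k ≤ k') :
    CopsWinIn G k' t := by
  obtain ⟨c₀, hc₀⟩ := h
  rcases Nat.eq_zero_or_pos k with rfl | hk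
  · exact absurd (hc₀ (Classical.arbitrary V)) (not_catchIn_of_fin_zero _ _)
  · have : Nonempty (Fin k) := ⟨⟨0, hk⟩⟩
    have hf := Function.invFun_surjective (Fin.castLE_injective hkk)
    exact ⟨c₀ ∘ Function.invFun (Fin.castLE hkk), fun r => (hc₀ r).comp_surjective hf⟩

lemma copsWinIn_natCard [Finite V] : CopsWinIn G (Nat.card V) 0 :=
  ⟨(Finite.equivFin V).symm, fun r => by
    rw [CatchIn]; exact ⟨Finite.equivFin V r, by simp⟩⟩

lemma exists_copsWinIn_of_copNumber_le [Finite V] [Nonempty V] {k : ℕ}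
    (hk : copNumber G ≤ k) : ∃ t, CopsWinIn G k t := by
  obtain ⟨t, ht⟩ : ∃ t, CopsWinIn G (copNumber G) t :=
    Nat.sInf_mem (s := {k | ∃ t, CopsWinIn G k t}) ⟨_, 0, copsWinIn_natCard⟩
  exact ⟨t, ht.mono_cops hk⟩

lemma copsWinIn_captTime {k : ℕ} (h : ∃ t, CopsWinIn G k t) :
    CopsWinIn G k (captTime G k) :=
  Nat.sInf_mem h

end Game

section Hypercube

variable {n : ℕ}

lemma hammingDist_le_one_of_hypercube_adj {u v : Fin n → Bool} (h : (hypercube n).Adj u v) :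
    hammingDist u v ≤ 1 := by
  obtain ⟨j, hj⟩ : ∃ j, ∀ i, i ≠ j → u i = v i := by
    rcases (fromRel_adj _ _ _).1 h with ⟨-, ⟨j, -, hj⟩ | ⟨j, -, hj⟩⟩
    · exact ⟨j, hj⟩
    · exact ⟨j, fun i hi => (hj i hi).symm⟩
  calc hammingDist u v ≤ #{j} :=
        card_le_card fun i hi => mem_singleton.2 (not_imp_comm.1 (hj i) (mem_filter.1 hi).2)
    _ = 1 := card_singleton j

lemma hammingDist_le_length {u v : Fin n → Bool} (p : (hypercube n).Walk u v) :
    hammingDist u v ≤ p.length := by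
  induction p with
  | nil => simp
  | @cons u v w h p ih =>
    calc hammingDist u w ≤ hammingDist u v + hammingDist v w := hammingDist_triangle u v w
      _ ≤ 1 + p.length := add_le_add (hammingDist_le_one_of_hypercube_adj h) ih
      _ = (Walk.cons h p).length := by rw [Walk.length_cons, add_comm]

lemma hammingDist_le_hypercube_edist (u v : Fin n → Bool) :
    (hammingDist u v : ℕ∞) ≤ (hypercube n).edist u v := by
  by_cases h : (hypercube n).edist u v = ⊤
  · simp [h]
  · obtain ⟨p, hp⟩ := exists_walk_of_edist_ne_top h
    rw [← hp]
    exact_mod_cast hammingDist_le_length p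

end Hypercube

/-- Flipping `v` on a set of at most `d` coordinates reaches every point of the ball. -/
lemma card_hammingBall_le {ι : Type*} [Fintype ι] [DecidableEq ι] (v : ι → Bool) (d : ℕ) :
    #{u | hammingDist v u ≤ d} ≤ ∑ i ∈ range (d + 1), (Fintype.card ι).choose i := by
  set small : Finset (Finset ι) := (range (d + 1)).biUnion fun i => powersetCard i univ
  let flip : Finset ι → ι → Bool := fun S j => if j ∈ S then !v j else v j
  have hsurj : Set.SurjOn flip small ({u | hammingDist v u ≤ d} : Finset (ι → Bool)) := by
    intro u hu
    refine ⟨({j | v j ≠ u j} : Finset ι), ?_, funext fun j => ?_⟩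
    · simp only [small, coe_biUnion, coe_range, Set.mem_iUnion, Set.mem_Iio, mem_coe,
        mem_powersetCard, subset_univ, true_and, exists_prop, exists_eq_right']
      exact Nat.lt_succ_of_le (mem_filter.1 (mem_coe.1 hu)).2
    · cases hv : v j <;> cases hu : u j <;> simp [flip, hv, hu]
  calc #{u | hammingDist v u ≤ d} ≤ #small := card_le_card_of_surjOn flip hsurj
    _ ≤ ∑ i ∈ range (d + 1), #(powersetCard i (univ : Finset ι)) := card_biUnion_le
    _ = ∑ i ∈ range (d + 1), (Fintype.card ι).choose i := by simp

lemma two_pow_le_mul_sum_choose_of_cover {n k d : ℕ} (c : Fin k → Fin n → Bool)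
    (hc : ∀ r, ∃ i, hammingDist (c i) r ≤ d) :
    2 ^ n ≤ k * ∑ i ∈ range (d + 1), n.choose i := by
  calc 2 ^ n = #(univ : Finset (Fin n → Bool)) := by simp
    _ ≤ #(univ.biUnion fun i => ({u | hammingDist (c i) u ≤ d} : Finset (Fin n → Bool))) :=
        card_le_card fun r _ => by simpa using hc r
    _ ≤ ∑ i, #({u | hammingDist (c i) u ≤ d} : Finset (Fin n → Bool)) := card_biUnion_le
    _ ≤ ∑ _i : Fin k, ∑ i ∈ range (d + 1), n.choose i :=
        sum_le_sum fun i _ => by simpa using card_hammingBall_le (c i) d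
    _ = k * ∑ i ∈ range (d + 1), n.choose i := by simp

lemma sum_range_choose_mul_pow_le_add_one_pow {n d : ℕ} (hdn : d ≤ n) {x : ℝ}
    (hx₀ : 0 ≤ x) (hx₁ : x ≤ 1) :
    (∑ i ∈ range (d + 1), (n.choose i : ℝ)) * x ^ d ≤ (x + 1) ^ n := by
  rw [add_pow, sum_mul]
  calc ∑ i ∈ range (d + 1), (n.choose i : ℝ) * x ^ d
      ≤ ∑ i ∈ range (d + 1), x ^ i * 1 ^ (n - i) * n.choose i :=
        sum_le_sum fun i hi => by
          rw [one_pow, mul_one, mul_comm]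
          exact mul_le_mul_of_nonneg_right
            (pow_le_pow_of_le_one hx₀ hx₁ (Nat.lt_succ_iff.1 (mem_range.1 hi))) (by positivity)
    _ ≤ ∑ i ∈ range (n + 1), x ^ i * 1 ^ (n - i) * n.choose i :=
        sum_le_sum_of_subset_of_nonneg (range_subset_range.2 (by omega))
          fun _ _ _ => by positivity

/-- The binomial tail bound `∑_{i ≤ d} C(n, i) ≤ (e n / d) ^ d`. -/
lemma sum_range_choose_mul_div_pow_le_exp {n d : ℕ} (hdn : d ≤ n) :
    (∑ i ∈ range (d + 1), (n.choose i : ℝ)) * ((d : ℝ) / n) ^ d ≤ Real.exp d := by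
  have hdn' : (d : ℝ) ≤ n := by exact_mod_cast hdn
  have hx₁ : (d : ℝ) / n ≤ 1 := div_le_one_of_le₀ hdn' n.cast_nonneg
  calc (∑ i ∈ range (d + 1), (n.choose i : ℝ)) * ((d : ℝ) / n) ^ d
      ≤ ((d : ℝ) / n + 1) ^ n := sum_range_choose_mul_pow_le_add_one_pow hdn (by positivity) hx₁
    _ ≤ Real.exp ((d : ℝ) / n) ^ n := by
        gcongr
        exact Real.add_one_le_exp _
    _ = Real.exp d := by
        rw [← Real.exp_nat_mul, mul_div_cancel_of_imp' fun hn => by simpa [hn] using hdn']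

theorem captTime_hypercube_lower_large'_general (n d k : ℕ)
    (hdn : (d : ℝ) ≤ (n : ℝ) / 3)
    (hk : copNumber (hypercube n) ≤ k)
    (hk' : (k : ℝ) < 1 / 2 * (2 : ℝ) ^ n * ((d : ℝ) / (Real.exp 1 * n)) ^ d) :
    d < captTime (hypercube n) k := by
  have hdn' : d ≤ n := by
    have : (d : ℝ) ≤ n := by linarith [(n.cast_nonneg : (0 : ℝ) ≤ n)]
    exact_mod_cast this
  by_contra! hcapt
  obtain ⟨c, hc⟩ := copsWinIn_captTime (exists_copsWinIn_of_copNumber_le hk)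
  have hcover : ∀ r, ∃ i, hammingDist (c i) r ≤ d := fun r => by
    obtain ⟨i, hi⟩ := (hc r).exists_edist_le
    have := (hammingDist_le_hypercube_edist (c i) r).trans (hi.trans (Nat.cast_le.2 hcapt))
    exact ⟨i, by exact_mod_cast this⟩
  have hcount : (2 : ℝ) ^ n ≤ k * ∑ i ∈ range (d + 1), (n.choose i : ℝ) := by
    exact_mod_cast two_pow_le_mul_sum_choose_of_cover c hcover
  have hk_exp : (k : ℝ) * Real.exp d < 1 / 2 * ((2 : ℝ) ^ n * ((d : ℝ) / n) ^ d) := by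
    rw [div_mul_eq_div_div_swap, div_pow, Real.exp_one_pow, ← mul_div_assoc,
      lt_div_iff₀ (Real.exp_pos _)] at hk'
    linarith
  have hcode : (2 : ℝ) ^ n * ((d : ℝ) / n) ^ d ≤ k * Real.exp d := by
    calc (2 : ℝ) ^ n * ((d : ℝ) / n) ^ d
        ≤ k * ((∑ i ∈ range (d + 1), (n.choose i : ℝ)) * ((d : ℝ) / n) ^ d) := by
          rw [← mul_assoc]; gcongr
      _ ≤ k * Real.exp d := by gcongr; exact sum_range_choose_mul_div_pow_le_exp hdn'
  linarith [mul_nonneg k.cast_nonneg (Real.exp_pos d).le]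

/-- Lower bound on the capture time of hypercubes with many cops, second form:
for `1 ≤ d ≤ n/3`, if `c(Q_n) ≤ k < (1/2) 2^n (d/(e n))^d`, then `capt_k(Q_n) > d`. -/
theorem captTime_hypercube_lower_large' (n d k : ℕ) (hd : 1 ≤ d)
    (hdn : (d : ℝ) ≤ (n : ℝ) / 3)
    (hk : copNumber (hypercube n) ≤ k)
    (hk' : (k : ℝ) < 1 / 2 * (2 : ℝ) ^ n * ((d : ℝ) / (Real.exp 1 * n)) ^ d) :
    d < captTime (hypercube n) k :=
  captTime_hypercube_lower_large'_general n d k hdn hk hk'
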